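/- arXiv:1507.07944 — 2 statements merged into one kernel-verified Lean document; each statement's English description precedes it below -/
import Mathlib

section
/- Let U ⊆ V with U^c = V∖U, and let β ∈ ℝ^V be such that the principal submatrix (H_β)_{U,U} is positive definite. Set Ĝ^U = ((H_β)_{U,U})^{−1}, η̂_i = η_i + Σ_{j∈U^c} W_{i,j} for i∈U, W̌ = W_{U^c,U^c} + W_{U^c,U} Ĝ^U W_{U,U^c} and η̌ = η_{U^c} + W_{U^c,U} Ĝ^U (η_U). Then W̌ is a symmetric U^c×U^c matrix with nonnegative entries, η̌ has nonnegative entries, H_β is positive definite if and only if both (H_β)_{U,U} and 2·diag(β_{U^c}) − W̌ are positive definite, and the densities satisfy the factorization f_{ν_V^{W,η}}(β) = f_{ν_U^{W_{U,U},η̂}}(β_U) · f_{ν_{U^c}^{W̌,η̌}}(β_{U^c}). In particular, under ν_V^{W,η} the conditional law of β_{U^c} given β_U is ν_{U^c}^{W̌,η̌}. -/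
open Matrix MeasureTheory

/-- The Schrödinger matrix `H_β = 2 diag(β) − W`. -/
noncomputable def Hmat {V : Type*} [Fintype V] [DecidableEq V]
    (W : Matrix V V ℝ) (β : V → ℝ) : Matrix V V ℝ :=
  Matrix.diagonal (fun i => 2 * β i) - W

open scoped Classical in
/-- The density of the measure `ν_V^{W,η}` with respect to Lebesgue measure on `ℝ^V`. -/
noncomputable def densEta {V : Type*} [Fintype V] [DecidableEq V]
    (W : Matrix V V ℝ) (η : V → ℝ) (β : V → ℝ) : ℝ :=
  (if (Hmat W β).PosDef then (1 : ℝ) else 0)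
    * ((2 / Real.pi) ^ ((Fintype.card V : ℝ) / 2))
    * Real.exp (-(1/2) * ((1 : V → ℝ) ⬝ᵥ (Hmat W β).mulVec 1)
        - (1/2) * (η ⬝ᵥ ((Hmat W β)⁻¹).mulVec η) + (η ⬝ᵥ (1 : V → ℝ)))
    * ((Hmat W β).det) ^ (-(1/2) : ℝ)

/-!
Reindex `V` as `U ⊕ Uᶜ`. In block form `H_β = [[A, -W₁₂], [-W₂₁, D]]` with `A = (H_β)_{U,U}`, and
the Schur complement `D - W₂₁ A⁻¹ W₁₂` is exactly `2 diag(β_{Uᶜ}) - W̌`. This gives the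
positive-definiteness criterion and `det H_β = det A · det (2 diag(β_{Uᶜ}) - W̌)`. Completing the
square, the exponent of the density is `-½ ⟨q, H_β⁻¹ q⟩` with `q = H_β 1 - η`, and block inversion
splits this form into the two corresponding forms for `(A, η̂)` and `(2 diag(β_{Uᶜ}) - W̌, η̌)`.
The signs of `W̌` and `η̌` come from `A⁻¹ ≥ 0` entrywise: a positive definite matrix with
nonpositive off-diagonal entries has a nonnegative inverse.
-/

namespace Matrix

variable {l m n R : Type*}

theorem mulVec_nonneg_of_nonneg [Fintype n] [Semiring R] [PartialOrder R] [IsOrderedRing R]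
    {M : Matrix m n R} (hM : ∀ i j, 0 ≤ M i j) {v : n → R} (hv : 0 ≤ v) : 0 ≤ M *ᵥ v :=
  fun i => Finset.sum_nonneg fun j _ => mul_nonneg (hM i j) (hv j)

theorem mul_apply_nonneg_of_nonneg [Fintype m] [Semiring R] [PartialOrder R] [IsOrderedRing R]
    {M : Matrix l m R} {N : Matrix m n R} (hM : ∀ i j, 0 ≤ M i j) (hN : ∀ i j, 0 ≤ N i j)
    (i : l) (j : n) : 0 ≤ (M * N) i j :=
  Finset.sum_nonneg fun k _ => mul_nonneg (hM i k) (hN k j)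

theorem IsSymm.transpose_toBlocks₁₂ {W : Matrix (m ⊕ n) (m ⊕ n) R} (hW : W.IsSymm) :
    W.toBlocks₁₂ᵀ = W.toBlocks₂₁ := by
  ext i j
  exact hW.apply (Sum.inr i) (Sum.inl j)

theorem posDef_submatrix_equiv [CommRing R] [PartialOrder R] [StarRing R] {M : Matrix n n R}
    (e : m ≃ n) : (M.submatrix e e).PosDef ↔ M.PosDef :=
  ⟨fun h => by simpa using h.submatrix e.symm.injective, fun h => h.submatrix e.injective⟩

open scoped ComplexOrder in
theorem posDef_fromBlocks₁₁_iff {𝕜 : Type*} [RCLike 𝕜] [Fintype m] [DecidableEq m] [Fintype n]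
    [DecidableEq n] {A : Matrix m m 𝕜} (B : Matrix m n 𝕜) (D : Matrix n n 𝕜) (hA : A.PosDef) :
    (fromBlocks A B Bᴴ D).PosDef ↔ (D - Bᴴ * A⁻¹ * B).PosDef := by
  have := hA.isUnit.invertible
  have hdet : (fromBlocks A B Bᴴ D).det = A.det * (D - Bᴴ * A⁻¹ * B).det := by
    rw [det_fromBlocks₁₁, invOf_eq_nonsing_inv]
  constructor
  · intro h
    refine ((PosDef.fromBlocks₁₁ B D hA).mp h.posSemidef).posDef_iff_det_ne_zero.mpr ?_
    exact right_ne_zero_of_mul (hdet ▸ ((isUnit_iff_isUnit_det _).mp h.isUnit).ne_zero)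
  · intro hS
    refine ((PosDef.fromBlocks₁₁ B D hA).mpr hS.posSemidef).posDef_iff_det_ne_zero.mpr ?_
    rw [hdet]
    exact mul_ne_zero ((isUnit_iff_isUnit_det A).mp hA.isUnit).ne_zero
      ((isUnit_iff_isUnit_det _).mp hS.isUnit).ne_zero

/-- Test against `x⁻`: the sign pattern of `A` gives `⟪x⁻, A x⁺⟫ ≤ 0`, hence `⟪x⁻, A x⁻⟫ ≤ 0`. -/
theorem PosDef.nonneg_of_mulVec_nonneg [Fintype n] {A : Matrix n n ℝ} (hA : A.PosDef)
    (hoff : ∀ i j, i ≠ j → A i j ≤ 0) {x : n → ℝ} (hx : 0 ≤ A *ᵥ x) : 0 ≤ x := by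
  have hcross : x⁻ ⬝ᵥ A *ᵥ x⁺ ≤ 0 := by
    simp only [dotProduct, mulVec, Finset.mul_sum]
    refine Finset.sum_nonpos fun i _ => Finset.sum_nonpos fun j _ => ?_
    rcases eq_or_ne i j with rfl | hij
    · rcases le_total (x i) 0 with h | h <;> simp [h]
    · have := mul_nonneg (negPart_nonneg (x i)) (posPart_nonneg (x j))
      simp only [Pi.negPart_apply, Pi.posPart_apply]
      nlinarith [hoff i j hij]
  have hquad : x⁻ ⬝ᵥ A *ᵥ x⁻ ≤ 0 := by
    have hsplit : A *ᵥ x = A *ᵥ x⁺ - A *ᵥ x⁻ := by rw [← mulVec_sub, posPart_sub_negPart]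
    have := dotProduct_nonneg_of_nonneg (negPart_nonneg x) hx
    rw [hsplit, dotProduct_sub] at this
    linarith
  have hneg : x⁻ = 0 := by
    by_contra h
    have := hA.dotProduct_mulVec_pos h
    simp only [star_trivial] at this
    linarith
  rwa [negPart_eq_zero] at hneg

theorem PosDef.inv_nonneg [Fintype n] [DecidableEq n] {A : Matrix n n ℝ} (hA : A.PosDef)
    (hoff : ∀ i j, i ≠ j → A i j ≤ 0) (i j : n) : 0 ≤ A⁻¹ i j := by
  have hcol : A *ᵥ (A⁻¹ *ᵥ Pi.single j 1) = Pi.single j 1 := by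
    rw [mulVec_mulVec, mul_nonsing_inv A (isUnit_iff_isUnit_det A |>.mp hA.isUnit), one_mulVec]
  have := hA.nonneg_of_mulVec_nonneg hoff (hcol ▸ Pi.single_nonneg.mpr zero_le_one) i
  simpa [mulVec_single_one] using this

section CommRing

variable [CommRing R] [Fintype m] [Fintype n]

theorem comp_equiv_dotProduct_submatrix_mulVec (e : m ≃ n) (M : Matrix n n R) (u v : n → R) :
    u ∘ e ⬝ᵥ M.submatrix e e *ᵥ (v ∘ e) = u ⬝ᵥ M *ᵥ v := by
  rw [submatrix_mulVec_equiv, comp_equiv_dotProduct_comp_equiv, Function.comp_assoc,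
    Equiv.self_comp_symm, Function.comp_id]

variable [DecidableEq n]

theorem mulVec_nonsing_inv_mulVec {H : Matrix n n R} (hH : IsUnit H.det) (v : n → R) :
    H *ᵥ H⁻¹ *ᵥ v = v := by
  rw [mulVec_mulVec, mul_nonsing_inv H hH, one_mulVec]

theorem nonsing_inv_mulVec_mulVec {H : Matrix n n R} (hH : IsUnit H.det) (v : n → R) :
    H⁻¹ *ᵥ H *ᵥ v = v := by
  rw [mulVec_mulVec, nonsing_inv_mul H hH, one_mulVec]

theorem dotProduct_inv_mulVec_sub {H : Matrix n n R} (hsymm : H.IsSymm) (hH : IsUnit H.det)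
    (v w : n → R) :
    (H *ᵥ v - w) ⬝ᵥ H⁻¹ *ᵥ (H *ᵥ v - w) = v ⬝ᵥ H *ᵥ v - 2 * (w ⬝ᵥ v) + w ⬝ᵥ H⁻¹ *ᵥ w := by
  have hcancel : H *ᵥ v ⬝ᵥ H⁻¹ *ᵥ w = w ⬝ᵥ v := by
    rw [← dotProduct_transpose_mulVec, hsymm.inv.eq, nonsing_inv_mulVec_mulVec hH]
  rw [mulVec_sub, nonsing_inv_mulVec_mulVec hH, sub_dotProduct, dotProduct_sub,
    dotProduct_sub, hcancel, dotProduct_comm (H *ᵥ v)]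
  ring

theorem dotProduct_inv_fromBlocks_mulVec [DecidableEq m] {A : Matrix m m R} (B : Matrix m n R)
    (D : Matrix n n R) (hA : A.IsSymm) (hAdet : IsUnit A.det)
    (hSdet : IsUnit (D - Bᵀ * A⁻¹ * B).det) (a : m → R) (b : n → R) :
    Sum.elim a b ⬝ᵥ (fromBlocks A B Bᵀ D)⁻¹ *ᵥ Sum.elim a b
      = a ⬝ᵥ A⁻¹ *ᵥ a
        + (b - Bᵀ *ᵥ A⁻¹ *ᵥ a) ⬝ᵥ (D - Bᵀ * A⁻¹ * B)⁻¹ *ᵥ (b - Bᵀ *ᵥ A⁻¹ *ᵥ a) := by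
  set y := (D - Bᵀ * A⁻¹ * B)⁻¹ *ᵥ (b - Bᵀ *ᵥ A⁻¹ *ᵥ a)
  have := A.invertibleOfIsUnitDet hAdet
  have hdet : IsUnit (fromBlocks A B Bᵀ D).det := by
    rw [det_fromBlocks₁₁, invOf_eq_nonsing_inv]
    exact hAdet.mul hSdet
  have hsolve : fromBlocks A B Bᵀ D *ᵥ Sum.elim (A⁻¹ *ᵥ (a - B *ᵥ y)) y = Sum.elim a b := by
    have hSy : D *ᵥ y - Bᵀ *ᵥ A⁻¹ *ᵥ B *ᵥ y = b - Bᵀ *ᵥ A⁻¹ *ᵥ a := by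
      simpa only [sub_mulVec, ← mulVec_mulVec] using mulVec_nonsing_inv_mulVec hSdet _
    rw [fromBlocks_mulVec, Sum.elim_comp_inl, Sum.elim_comp_inr, mulVec_nonsing_inv_mulVec hAdet,
      sub_add_cancel, mulVec_sub, mulVec_sub]
    congr 1
    linear_combination hSy
  have hx : (fromBlocks A B Bᵀ D)⁻¹ *ᵥ Sum.elim a b = Sum.elim (A⁻¹ *ᵥ (a - B *ᵥ y)) y := by
    rw [← hsolve, nonsing_inv_mulVec_mulVec hdet]
  have hcross : a ⬝ᵥ A⁻¹ *ᵥ B *ᵥ y = Bᵀ *ᵥ A⁻¹ *ᵥ a ⬝ᵥ y := by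
    rw [← dotProduct_transpose_mulVec, hA.inv.eq, dotProduct_comm, ← dotProduct_transpose_mulVec,
      dotProduct_comm]
  rw [hx, sumElim_dotProduct_sumElim, mulVec_sub, dotProduct_sub, hcross, sub_dotProduct]
  ring

end CommRing

end Matrix

section Hmat

variable {V : Type*} [Fintype V] [DecidableEq V]

theorem Hmat_apply_of_ne (W : Matrix V V ℝ) (β : V → ℝ) {i j : V} (h : i ≠ j) :
    Hmat W β i j = -W i j := by
  simp [Hmat, h]

theorem Hmat_isSymm {W : Matrix V V ℝ} (hW : W.IsSymm) (β : V → ℝ) : (Hmat W β).IsSymm :=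
  (isSymm_diagonal _).sub hW

theorem Hmat_submatrix {m : Type*} [Fintype m] [DecidableEq m] (W : Matrix V V ℝ) (β : V → ℝ)
    {f : m → V} (hf : Function.Injective f) :
    (Hmat W β).submatrix f f = Hmat (W.submatrix f f) (β ∘ f) := by
  ext i j
  rcases eq_or_ne i j with rfl | hij
  · simp [Hmat]
  · simp [Hmat, hij, hf.ne hij]

theorem densEta_of_not_posDef {W : Matrix V V ℝ} {β : V → ℝ} (h : ¬(Hmat W β).PosDef)
    (η : V → ℝ) : densEta W η β = 0 := by
  simp [densEta, h]

theorem densEta_of_posDef {W : Matrix V V ℝ} {β : V → ℝ} (h : (Hmat W β).PosDef) (η : V → ℝ) :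
    densEta W η β = (2 / Real.pi) ^ ((Fintype.card V : ℝ) / 2)
      * Real.exp (-(1 / 2) * ((Hmat W β *ᵥ 1 - η) ⬝ᵥ (Hmat W β)⁻¹ *ᵥ (Hmat W β *ᵥ 1 - η)))
      * (Hmat W β).det ^ (-(1 / 2) : ℝ) := by
  have hsymm : (Hmat W β).IsSymm := isHermitian_iff_isSymm.mp h.isHermitian
  rw [densEta, if_pos h, one_mul,
    dotProduct_inv_mulVec_sub hsymm ((isUnit_iff_isUnit_det _).mp h.isUnit)]
  ring_nf

theorem densEta_submatrix_equiv {m : Type*} [Fintype m] [DecidableEq m] (W : Matrix V V ℝ)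
    (η β : V → ℝ) (e : m ≃ V) : densEta (W.submatrix e e) (η ∘ e) (β ∘ e) = densEta W η β := by
  have h1 : (1 : m → ℝ) = (1 : V → ℝ) ∘ e := rfl
  rw [densEta, densEta, ← Hmat_submatrix W β e.injective, posDef_submatrix_equiv,
    inv_submatrix_equiv, det_submatrix_equiv_self, Fintype.card_congr e, h1,
    comp_equiv_dotProduct_submatrix_mulVec, comp_equiv_dotProduct_submatrix_mulVec,
    comp_equiv_dotProduct_comp_equiv]

theorem Hmat_inv_nonneg {W : Matrix V V ℝ} {β : V → ℝ} (hWpos : ∀ i j, 0 ≤ W i j)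
    (hH : (Hmat W β).PosDef) (i j : V) : 0 ≤ (Hmat W β)⁻¹ i j :=
  hH.inv_nonneg
    (fun _ _ hij => (Hmat_apply_of_ne W β hij).trans_le (neg_nonpos.mpr (hWpos _ _))) i j

end Hmat

section Blocks

variable {m n : Type*} [Fintype m] [DecidableEq m] {W : Matrix (m ⊕ n) (m ⊕ n) ℝ}
  {β : m ⊕ n → ℝ}

-- `W̌`, `η̂` and `η̌` of the paper, for the partition `U ⊕ Uᶜ = m ⊕ n`.
noncomputable def conditionalWeight (W : Matrix (m ⊕ n) (m ⊕ n) ℝ) (β : m ⊕ n → ℝ) :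
    Matrix n n ℝ :=
  W.toBlocks₂₂ + W.toBlocks₂₁ * (Hmat W.toBlocks₁₁ (β ∘ Sum.inl))⁻¹ * W.toBlocks₁₂

def marginalEta [Fintype n] (W : Matrix (m ⊕ n) (m ⊕ n) ℝ) (η : m ⊕ n → ℝ) : m → ℝ :=
  η ∘ Sum.inl + W.toBlocks₁₂ *ᵥ 1

noncomputable def conditionalEta (W : Matrix (m ⊕ n) (m ⊕ n) ℝ) (η β : m ⊕ n → ℝ) : n → ℝ :=
  η ∘ Sum.inr + W.toBlocks₂₁ *ᵥ (Hmat W.toBlocks₁₁ (β ∘ Sum.inl))⁻¹ *ᵥ (η ∘ Sum.inl)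

theorem conditionalWeight_isSymm (hW : W.IsSymm) (β : m ⊕ n → ℝ) :
    (conditionalWeight W β).IsSymm := by
  have hA : (Hmat W.toBlocks₁₁ (β ∘ Sum.inl)).IsSymm := Hmat_isSymm (hW.submatrix Sum.inl) _
  have h₂₂ : W.toBlocks₂₂.IsSymm := hW.submatrix Sum.inr
  have h₂₁ : W.toBlocks₂₁ᵀ = W.toBlocks₁₂ := by rw [← hW.transpose_toBlocks₁₂, transpose_transpose]
  rw [IsSymm, conditionalWeight, transpose_add, transpose_mul, transpose_mul, hA.inv.eq, h₂₁,
    hW.transpose_toBlocks₁₂, h₂₂.eq, Matrix.mul_assoc]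

theorem conditionalWeight_nonneg (hWpos : ∀ i j, 0 ≤ W i j)
    (hA : (Hmat W.toBlocks₁₁ (β ∘ Sum.inl)).PosDef) (i j : n) : 0 ≤ conditionalWeight W β i j :=
  add_nonneg (hWpos _ _) <| mul_apply_nonneg_of_nonneg
    (mul_apply_nonneg_of_nonneg (fun _ _ => hWpos _ _) (Hmat_inv_nonneg (fun _ _ => hWpos _ _) hA))
    (fun _ _ => hWpos _ _) i j

theorem conditionalEta_nonneg (hWpos : ∀ i j, 0 ≤ W i j) {η : m ⊕ n → ℝ} (hη : 0 ≤ η)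
    (hA : (Hmat W.toBlocks₁₁ (β ∘ Sum.inl)).PosDef) : 0 ≤ conditionalEta W η β :=
  add_nonneg (fun _ => hη _) <| mulVec_nonneg_of_nonneg (fun _ _ => hWpos _ _) <|
    mulVec_nonneg_of_nonneg (Hmat_inv_nonneg (fun _ _ => hWpos _ _) hA) (fun _ => hη _)

variable [Fintype n] [DecidableEq n]

theorem Hmat_eq_fromBlocks (hW : W.IsSymm) (β : m ⊕ n → ℝ) :
    Hmat W β = fromBlocks (Hmat W.toBlocks₁₁ (β ∘ Sum.inl)) (-W.toBlocks₁₂) (-W.toBlocks₁₂)ᵀ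
      (Hmat W.toBlocks₂₂ (β ∘ Sum.inr)) := by
  ext (i | i) (j | j) <;>
    simp [Hmat, diagonal_apply, hW.apply, toBlocks₁₁, toBlocks₁₂, toBlocks₂₂]

theorem Hmat_conditionalWeight (hW : W.IsSymm) (β : m ⊕ n → ℝ) :
    Hmat W.toBlocks₂₂ (β ∘ Sum.inr)
        - (-W.toBlocks₁₂)ᵀ * (Hmat W.toBlocks₁₁ (β ∘ Sum.inl))⁻¹ * (-W.toBlocks₁₂)
      = Hmat (conditionalWeight W β) (β ∘ Sum.inr) := by
  simp only [Hmat, conditionalWeight, transpose_neg, hW.transpose_toBlocks₁₂, Matrix.neg_mul,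
    Matrix.mul_neg, neg_neg, sub_sub]

theorem posDef_Hmat_iff (hW : W.IsSymm) (hA : (Hmat W.toBlocks₁₁ (β ∘ Sum.inl)).PosDef) :
    (Hmat W β).PosDef ↔ (Hmat (conditionalWeight W β) (β ∘ Sum.inr)).PosDef := by
  rw [Hmat_eq_fromBlocks hW, ← Hmat_conditionalWeight hW, ← conjTranspose_eq_transpose_of_trivial]
  exact posDef_fromBlocks₁₁_iff _ _ hA

theorem det_Hmat (hW : W.IsSymm) (hA : (Hmat W.toBlocks₁₁ (β ∘ Sum.inl)).PosDef) :
    (Hmat W β).det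
      = (Hmat W.toBlocks₁₁ (β ∘ Sum.inl)).det
        * (Hmat (conditionalWeight W β) (β ∘ Sum.inr)).det := by
  have := hA.isUnit.invertible
  rw [Hmat_eq_fromBlocks hW, det_fromBlocks₁₁, invOf_eq_nonsing_inv, Hmat_conditionalWeight hW]

theorem dotProduct_inv_Hmat_mulVec_split (hW : W.IsSymm)
    (hA : (Hmat W.toBlocks₁₁ (β ∘ Sum.inl)).PosDef)
    (hS : (Hmat (conditionalWeight W β) (β ∘ Sum.inr)).PosDef) (η : m ⊕ n → ℝ) :
    let q := Hmat W β *ᵥ 1 - η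
    let q₁ := Hmat W.toBlocks₁₁ (β ∘ Sum.inl) *ᵥ 1 - marginalEta W η
    let q₂ := Hmat (conditionalWeight W β) (β ∘ Sum.inr) *ᵥ 1 - conditionalEta W η β
    q ⬝ᵥ (Hmat W β)⁻¹ *ᵥ q
      = q₁ ⬝ᵥ (Hmat W.toBlocks₁₁ (β ∘ Sum.inl))⁻¹ *ᵥ q₁
        + q₂ ⬝ᵥ (Hmat (conditionalWeight W β) (β ∘ Sum.inr))⁻¹ *ᵥ q₂ := by
  intro q q₁ q₂
  have hAdet := (isUnit_iff_isUnit_det _).mp hA.isUnit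
  have hSdet := (isUnit_iff_isUnit_det _).mp hS.isUnit
  have hAsymm : (Hmat W.toBlocks₁₁ (β ∘ Sum.inl)).IsSymm := Hmat_isSymm (hW.submatrix Sum.inl) _
  have hq₁ : q ∘ Sum.inl = q₁ := by
    simp only [q, q₁, Hmat_eq_fromBlocks hW β, fromBlocks_mulVec, marginalEta, Pi.sub_comp,
      Sum.elim_comp_inl, Pi.one_comp, neg_mulVec]
    abel
  have hq₂ : q ∘ Sum.inr - (-W.toBlocks₁₂)ᵀ *ᵥ (Hmat W.toBlocks₁₁ (β ∘ Sum.inl))⁻¹ *ᵥ q₁ = q₂ := by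
    simp only [q, q₁, q₂, ← Hmat_conditionalWeight hW, Hmat_eq_fromBlocks hW β, fromBlocks_mulVec,
      marginalEta, conditionalEta, Pi.sub_comp, Sum.elim_comp_inr, Pi.one_comp, sub_mulVec,
      mulVec_sub, mulVec_add, neg_mulVec, mulVec_neg, ← mulVec_mulVec, transpose_neg,
      hW.transpose_toBlocks₁₂, nonsing_inv_mulVec_mulVec hAdet]
    abel
  have key := dotProduct_inv_fromBlocks_mulVec (-W.toBlocks₁₂) (Hmat W.toBlocks₂₂ (β ∘ Sum.inr))
    hAsymm hAdet (by rwa [Hmat_conditionalWeight hW]) (q ∘ Sum.inl) (q ∘ Sum.inr)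
  rwa [Sum.elim_comp_inl_inr, ← Hmat_eq_fromBlocks hW, Hmat_conditionalWeight hW, hq₁, hq₂] at key

theorem densEta_eq_mul (hW : W.IsSymm) (hA : (Hmat W.toBlocks₁₁ (β ∘ Sum.inl)).PosDef)
    (η : m ⊕ n → ℝ) :
    densEta W η β = densEta W.toBlocks₁₁ (marginalEta W η) (β ∘ Sum.inl)
      * densEta (conditionalWeight W β) (conditionalEta W η β) (β ∘ Sum.inr) := by
  by_cases hH : (Hmat W β).PosDef
  · have hS := (posDef_Hmat_iff hW hA).mp hH
    have hcard : (Fintype.card (m ⊕ n) : ℝ) / 2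
        = (Fintype.card m : ℝ) / 2 + (Fintype.card n : ℝ) / 2 := by
      rw [Fintype.card_sum, Nat.cast_add, add_div]
    rw [densEta_of_posDef hH, densEta_of_posDef hA, densEta_of_posDef hS,
      dotProduct_inv_Hmat_mulVec_split hW hA hS, det_Hmat hW hA, hcard,
      Real.rpow_add (by positivity), Real.mul_rpow hA.det_pos.le hS.det_pos.le, mul_add,
      Real.exp_add]
    ring
  · rw [densEta_of_not_posDef hH, densEta_of_not_posDef ((posDef_Hmat_iff hW hA).not.mp hH),
      mul_zero]

end Blocks

def Finset.sumComplEquiv {V : Type*} [DecidableEq V] [Fintype V] (U : Finset V) :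
    U ⊕ ↥Uᶜ ≃ V where
  toFun := Sum.elim Subtype.val Subtype.val
  invFun x := if h : x ∈ U then Sum.inl ⟨x, h⟩ else Sum.inr ⟨x, Finset.mem_compl.mpr h⟩
  left_inv := by
    rintro (⟨x, hx⟩ | ⟨x, hx⟩)
    · simp [hx]
    · simp [Finset.mem_compl.mp hx]
  right_inv x := by by_cases h : x ∈ U <;> simp [h]

theorem stmt3_general {V : Type*} [Fintype V] [DecidableEq V]
    (W : Matrix V V ℝ) (hWsymm : W.IsSymm) (hWpos : ∀ i j, 0 ≤ W i j)
    (η : V → ℝ) (hη : ∀ i, 0 ≤ η i) (U : Finset V) (β : V → ℝ)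
    (hUpd : ((Hmat W β).submatrix (Subtype.val : {x : V // x ∈ U} → V) Subtype.val).PosDef)
    (Ghat : Matrix {x : V // x ∈ U} {x : V // x ∈ U} ℝ)
    (hGhat : Ghat = ((Hmat W β).submatrix (Subtype.val : {x : V // x ∈ U} → V) Subtype.val)⁻¹)
    (ηhat : {x : V // x ∈ U} → ℝ)
    (hηhat : ∀ i : {x : V // x ∈ U}, ηhat i = η ↑i + ∑ j ∈ Uᶜ, W ↑i j)
    (Wcheck : Matrix {x : V // x ∈ Uᶜ} {x : V // x ∈ Uᶜ} ℝ)
    (hWcheck : Wcheck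
      = W.submatrix (Subtype.val : {x : V // x ∈ Uᶜ} → V) Subtype.val
        + (W.submatrix (Subtype.val : {x : V // x ∈ Uᶜ} → V)
              (Subtype.val : {x : V // x ∈ U} → V))
          * Ghat
          * (W.submatrix (Subtype.val : {x : V // x ∈ U} → V)
              (Subtype.val : {x : V // x ∈ Uᶜ} → V)))
    (ηcheck : {x : V // x ∈ Uᶜ} → ℝ)
    (hηcheck : ∀ i : {x : V // x ∈ Uᶜ}, ηcheck i
      = η ↑i + ((W.submatrix (Subtype.val : {x : V // x ∈ Uᶜ} → V)
            (Subtype.val : {x : V // x ∈ U} → V)).mulVec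
            (Ghat.mulVec (fun j : {x : V // x ∈ U} => η ↑j))) i) :
    (∀ i j, Wcheck i j = Wcheck j i) ∧ (∀ i j, 0 ≤ Wcheck i j) ∧ (∀ i, 0 ≤ ηcheck i) ∧
    ((Hmat W β).PosDef ↔
      (((Hmat W β).submatrix (Subtype.val : {x : V // x ∈ U} → V) Subtype.val).PosDef ∧
        (Hmat Wcheck (fun i : {x : V // x ∈ Uᶜ} => β ↑i)).PosDef)) ∧
    densEta W η β
      = densEta (W.submatrix (Subtype.val : {x : V // x ∈ U} → V) Subtype.val) ηhat
          (fun i : {x : V // x ∈ U} => β ↑i)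
        * densEta Wcheck ηcheck (fun i : {x : V // x ∈ Uᶜ} => β ↑i) := by
  subst hGhat hWcheck
  set e := U.sumComplEquiv
  have hW' : (W.submatrix e e).IsSymm := hWsymm.submatrix e
  have hA : (Hmat W β).submatrix Subtype.val Subtype.val
      = Hmat (W.submatrix e e).toBlocks₁₁ ((β ∘ e) ∘ Sum.inl) :=
    Hmat_submatrix W β Subtype.val_injective
  have hηhat' : ηhat = marginalEta (W.submatrix e e) (η ∘ e) := by
    ext i
    rw [hηhat, marginalEta, Pi.add_apply, ← Finset.sum_coe_sort Uᶜ]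
    simp only [mulVec, dotProduct, Pi.one_apply, mul_one]
    rfl
  have hηcheck' : ηcheck = conditionalEta (W.submatrix e e) (η ∘ e) (β ∘ e) := by
    ext i
    rw [hηcheck, hA]
    rfl
  have hH : (Hmat W β).PosDef ↔ (Hmat (W.submatrix e e) (β ∘ e)).PosDef := by
    rw [← Hmat_submatrix W β e.injective, posDef_submatrix_equiv]
  rw [hA] at hUpd ⊢
  rw [hηhat', hηcheck', ← densEta_submatrix_equiv W η β e, hH]
  exact ⟨fun i j => ((conditionalWeight_isSymm hW' _).apply i j).symm,
    conditionalWeight_nonneg (fun _ _ => hWpos _ _) hUpd,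
    conditionalEta_nonneg (fun _ _ => hWpos _ _) (fun _ => hη _) hUpd,
    ⟨fun h => ⟨hUpd, (posDef_Hmat_iff hW' hUpd).mp h⟩, fun h => (posDef_Hmat_iff hW' hUpd).mpr h.2⟩,
    densEta_eq_mul hW' hUpd _⟩

/-- Schur-complement factorization of the density of `ν_V^{W,η}`:
with `Ĝ^U = ((H_β)_{U,U})⁻¹`, `η̂ = η_U + W_{U,U^c} 1`, `W̌ = W_{U^c,U^c} + W_{U^c,U} Ĝ^U W_{U,U^c}`
and `η̌ = η_{U^c} + W_{U^c,U} Ĝ^U η_U`, the matrix `W̌` is symmetric with nonnegative entries,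
`η̌` is nonnegative, `H_β` is positive definite iff both `(H_β)_{U,U}` and `2 diag(β_{U^c}) − W̌`
are, and `f_{ν_V^{W,η}}(β) = f_{ν_U^{W_{U,U},η̂}}(β_U) · f_{ν_{U^c}^{W̌,η̌}}(β_{U^c})`. -/
theorem stmt3 {V : Type*} [Fintype V] [DecidableEq V] [Nonempty V]
    (W : Matrix V V ℝ) (hWsymm : W.IsSymm) (hWpos : ∀ i j, 0 ≤ W i j)
    (η : V → ℝ) (hη : ∀ i, 0 ≤ η i) (U : Finset V) (β : V → ℝ)
    (hUpd : ((Hmat W β).submatrix (Subtype.val : {x : V // x ∈ U} → V) Subtype.val).PosDef)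
    (Ghat : Matrix {x : V // x ∈ U} {x : V // x ∈ U} ℝ)
    (hGhat : Ghat = ((Hmat W β).submatrix (Subtype.val : {x : V // x ∈ U} → V) Subtype.val)⁻¹)
    (ηhat : {x : V // x ∈ U} → ℝ)
    (hηhat : ∀ i : {x : V // x ∈ U}, ηhat i = η ↑i + ∑ j ∈ Uᶜ, W ↑i j)
    (Wcheck : Matrix {x : V // x ∈ Uᶜ} {x : V // x ∈ Uᶜ} ℝ)
    (hWcheck : Wcheck
      = W.submatrix (Subtype.val : {x : V // x ∈ Uᶜ} → V) Subtype.val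
        + (W.submatrix (Subtype.val : {x : V // x ∈ Uᶜ} → V)
              (Subtype.val : {x : V // x ∈ U} → V))
          * Ghat
          * (W.submatrix (Subtype.val : {x : V // x ∈ U} → V)
              (Subtype.val : {x : V // x ∈ Uᶜ} → V)))
    (ηcheck : {x : V // x ∈ Uᶜ} → ℝ)
    (hηcheck : ∀ i : {x : V // x ∈ Uᶜ}, ηcheck i
      = η ↑i + ((W.submatrix (Subtype.val : {x : V // x ∈ Uᶜ} → V)
            (Subtype.val : {x : V // x ∈ U} → V)).mulVec
            (Ghat.mulVec (fun j : {x : V // x ∈ U} => η ↑j))) i) :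
    (∀ i j, Wcheck i j = Wcheck j i) ∧ (∀ i j, 0 ≤ Wcheck i j) ∧ (∀ i, 0 ≤ ηcheck i) ∧
    ((Hmat W β).PosDef ↔
      (((Hmat W β).submatrix (Subtype.val : {x : V // x ∈ U} → V) Subtype.val).PosDef ∧
        (Hmat Wcheck (fun i : {x : V // x ∈ Uᶜ} => β ↑i)).PosDef)) ∧
    densEta W η β
      = densEta (W.submatrix (Subtype.val : {x : V // x ∈ U} → V) Subtype.val) ηhat
          (fun i : {x : V // x ∈ U} => β ↑i)
        * densEta Wcheck ηcheck (fun i : {x : V // x ∈ Uᶜ} => β ↑i) :=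
  stmt3_general W hWsymm hWpos η hη U β hUpd Ghat hGhat ηhat hηhat Wcheck hWcheck ηcheck hηcheck
end

section
/- Let V be finite, W symmetric with nonnegative entries and zero diagonal, and β ∈ ℝ^V such that H_β = 2·diag(β) − W is positive definite; let G = (H_β)^{−1}. Let 𝒫̄_{j,i} be the set of paths σ = (σ_0 = j, …, σ_m = i) from j to i with σ_k ≠ i for 0 ≤ k ≤ m−1. Then for all i,j ∈ V, the family (W_σ/(2β)^−_σ)_{σ∈𝒫̄_{j,i}} is summable and Σ_{σ∈𝒫̄_{j,i}} W_σ/(2β)^−_σ = G(i,j)/G(i,i). -/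
open Matrix

/-- Weight `W_σ = Π_{k} W_{σ_k,σ_{k+1}}` of a path given as a list of vertices. -/
noncomputable def wWeight {V : Type*} (W : Matrix V V ℝ) (l : List V) : ℝ :=
  ((l.zip l.tail).map (fun p => W p.1 p.2)).prod

/-- `(2β)^−_σ = Π_{k=0}^{m−1} 2 β_{σ_k}` (all vertices but the last one). -/
noncomputable def twoBetaMinus {V : Type*} (β : V → ℝ) (l : List V) : ℝ :=
  (l.dropLast.map (fun k => 2 * β k)).prod

/-- `l` is a path from `j` to `i` for the adjacency relation `A`, hitting `i` only at its
last vertex (`σ_k ≠ i` for `0 ≤ k ≤ m−1`). -/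
def IsStoppedWalkList {V : Type*} (A : V → V → Prop) (j i : V) (l : List V) : Prop :=
  l ≠ [] ∧ l.head? = some j ∧ l.getLast? = some i ∧ l.Chain' A ∧ ∀ x ∈ l.dropLast, x ≠ i

open scoped ENNReal

/-!
Write `F v` for the weighted sum over the stopped walks from `v` to `i`. Splitting off the first
step gives `F i = 1` and `2 β_v F v = ∑ₖ W_{vk} F k` for `v ≠ i`, i.e. `H_β F` vanishes off `i`.
The column `u = G(·, i) / G(i, i)` has the same two properties, so `(F - u)ᵀ H_β (F - u) = 0` and
positive definiteness gives `F = u`. Finiteness of `F` comes first: `u ≥ 0` since a positive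
definite matrix with nonpositive off-diagonal entries has a nonnegative inverse, and induction on
the length of walks bounds every truncation of `F` by `u`. The sums are taken in `ℝ≥0∞`, where the
first-step decomposition needs no summability.
-/

namespace IsStoppedWalkList

variable {V : Type*} {A : V → V → Prop} {i j v : V} {l : List V}

lemma singleton (A : V → V → Prop) (i : V) : IsStoppedWalkList A i i [i] :=
  ⟨List.cons_ne_nil _ _, rfl, rfl, List.isChain_singleton i, by simp⟩

lemma exists_eq_cons (h : IsStoppedWalkList A j i l) : ∃ t, l = j :: t := by
  obtain ⟨hne, hhead, -⟩ := h
  cases l with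
  | nil => exact absurd rfl hne
  | cons x t => exact ⟨t, by simpa using hhead⟩

lemma eq_singleton (h : IsStoppedWalkList A i i l) : l = [i] := by
  obtain ⟨t, rfl⟩ := h.exists_eq_cons
  cases t with
  | nil => rfl
  | cons x t => exact absurd rfl (h.2.2.2.2 i (by simp))

lemma cons (hvj : A v j) (hvi : v ≠ i) (h : IsStoppedWalkList A j i l) :
    IsStoppedWalkList A v i (v :: l) := by
  obtain ⟨t, rfl⟩ := h.exists_eq_cons
  obtain ⟨-, -, hlast, hchain, hdrop⟩ := h
  refine ⟨List.cons_ne_nil _ _, rfl, ?_, List.isChain_cons_cons.mpr ⟨hvj, hchain⟩, ?_⟩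
  · rwa [List.getLast?_cons_cons]
  · rw [List.dropLast_cons_cons]
    simpa [hvi] using hdrop

lemma exists_cons_of_ne (hvi : v ≠ i) (h : IsStoppedWalkList A v i l) :
    ∃ k t, A v k ∧ IsStoppedWalkList A k i t ∧ l = v :: t := by
  obtain ⟨t, rfl⟩ := h.exists_eq_cons
  obtain ⟨-, -, hlast, hchain, hdrop⟩ := h
  cases t with
  | nil => exact absurd (by simpa using hlast) hvi
  | cons k s =>
    refine ⟨k, k :: s, (List.isChain_cons_cons.mp hchain).1,
      ⟨List.cons_ne_nil _ _, rfl, ?_, (List.isChain_cons_cons.mp hchain).2, ?_⟩, rfl⟩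
    · rwa [List.getLast?_cons_cons] at hlast
    · rw [List.dropLast_cons_cons] at hdrop
      exact fun x hx => hdrop x (List.mem_cons_of_mem _ hx)

noncomputable def consEquiv (hvi : v ≠ i) :
    (Σ k : {k // A v k}, {t // IsStoppedWalkList A k i t}) ≃
      {l // IsStoppedWalkList A v i l} :=
  Equiv.ofBijective (fun p => ⟨v :: p.2, p.2.2.cons p.1.2 hvi⟩) <| by
    constructor
    · rintro ⟨k, t, ht⟩ ⟨k', t', ht'⟩ h
      obtain rfl : t = t' := List.cons_injective (congrArg Subtype.val h)
      obtain ⟨s, rfl⟩ := ht.exists_eq_cons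
      obtain ⟨s', hs'⟩ := ht'.exists_eq_cons
      exact Sigma.subtype_ext (Subtype.ext (List.cons.inj hs').1) rfl
    · rintro ⟨l, hl⟩
      obtain ⟨k, t, hk, ht, rfl⟩ := hl.exists_cons_of_ne hvi
      exact ⟨⟨⟨k, hk⟩, ⟨t, ht⟩⟩, rfl⟩

lemma tsum_self (g : List V → ℝ≥0∞) :
    ∑' l : {l // IsStoppedWalkList A i i l}, g l = g [i] :=
  tsum_eq_single ⟨[i], singleton A i⟩ fun l hl => absurd (Subtype.ext l.2.eq_singleton) hl

lemma tsum_eq_sum_mul [Fintype V] (hvi : v ≠ i) (g h : List V → ℝ≥0∞) (c : V → ℝ≥0∞)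
    (hc : ∀ k, ¬ A v k → c k = 0)
    (hg : ∀ k t, A v k → IsStoppedWalkList A k i t → g (v :: t) = c k * h t) :
    ∑' l : {l // IsStoppedWalkList A v i l}, g l =
      ∑ k, c k * ∑' t : {t // IsStoppedWalkList A k i t}, h t := by
  rw [← (consEquiv hvi).tsum_eq, ENNReal.tsum_sigma', ← tsum_fintype (L := .unconditional _)]
  calc ∑' k : {k // A v k}, ∑' t : {t // IsStoppedWalkList A k i t}, g (v :: t)
      = ∑' k : {k // A v k}, c k * ∑' t : {t // IsStoppedWalkList A k i t}, h t := by
        refine tsum_congr fun k => ?_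
        rw [← ENNReal.tsum_mul_left]
        exact tsum_congr fun t => hg k t k.2 t.2
    _ = _ := tsum_subtype_eq_of_support_subset (s := {k | A v k})
        (f := fun k => c k * ∑' t : {t // IsStoppedWalkList A k i t}, h t) fun k hk =>
        not_not.mp fun hA => hk (by simp [hc k hA])

end IsStoppedWalkList

namespace Matrix.PosDef

variable {n : Type*} [Fintype n] {M : Matrix n n ℝ}

lemma eq_zero_of_forall_eq_zero_or_mulVec_eq_zero (hM : M.PosDef) {x : n → ℝ}
    (hx : ∀ a, x a = 0 ∨ (M *ᵥ x) a = 0) : x = 0 := by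
  by_contra hne
  refine (hM.dotProduct_mulVec_pos hne).ne' (Finset.sum_eq_zero fun a _ => ?_)
  rcases hx a with h | h <;> simp [h]

lemma nonneg_of_mulVec_nonneg_s9 (hM : M.PosDef) (hoff : ∀ a b, a ≠ b → M a b ≤ 0) {x : n → ℝ}
    (hx : 0 ≤ M *ᵥ x) : 0 ≤ x := by
  -- The negative part `y` of `x = y + z` has `y ⬝ᵥ M z ≥ 0` by the sign pattern of `M`,
  -- hence `y ⬝ᵥ M y ≤ y ⬝ᵥ M x ≤ 0`.
  set y : n → ℝ := fun a => min (x a) 0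
  set z : n → ℝ := fun a => max (x a) 0
  have hyz : 0 ≤ y ⬝ᵥ (M *ᵥ z) := by
    rw [dot_mulVec_eq_sum_sum]
    refine Finset.sum_nonneg fun b _ => Finset.sum_nonneg fun a _ => ?_
    rcases eq_or_ne a b with rfl | hab
    · rcases le_total (x a) 0 with h | h <;> simp [y, z, h]
    · exact mul_nonneg (mul_nonneg_of_nonpos_of_nonpos (min_le_right _ _) (hoff a b hab))
        (le_max_right _ _)
  have hyx : y ⬝ᵥ (M *ᵥ x) ≤ 0 :=
    Finset.sum_nonpos fun a _ => mul_nonpos_of_nonpos_of_nonneg (min_le_right _ _) (hx a)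
  have hy : y = 0 := by
    by_contra hy
    have hpos := hM.dotProduct_mulVec_pos hy
    have hxyz : x = y + z := funext fun a => by
      simp only [Pi.add_apply, y, z, min_add_max, add_zero]
    rw [star_trivial] at hpos
    rw [hxyz, mulVec_add, dotProduct_add] at hyx
    linarith
  intro a
  simpa [y] using congrFun hy a

lemma inv_apply_nonneg [DecidableEq n] (hM : M.PosDef) (hoff : ∀ a b, a ≠ b → M a b ≤ 0)
    (a b : n) : 0 ≤ M⁻¹ a b := by
  have h := hM.nonneg_of_mulVec_nonneg_s9 hoff (x := M⁻¹ *ᵥ Pi.single b 1) <| by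
    rw [mulVec_mulVec, mul_nonsing_inv _ ((isUnit_iff_isUnit_det _).mp hM.isUnit), one_mulVec]
    exact Pi.single_nonneg.mpr zero_le_one
  simpa using h a

end Matrix.PosDef

section WalkWeight

variable {V : Type*} (W : Matrix V V ℝ) (β : V → ℝ)

noncomputable def walkWeight (l : List V) : ℝ :=
  wWeight W l / twoBetaMinus β l

@[simp]
lemma walkWeight_singleton (v : V) : walkWeight W β [v] = 1 := by
  simp [walkWeight, wWeight, twoBetaMinus]

lemma walkWeight_cons_cons (a b : V) (t : List V) :
    walkWeight W β (a :: b :: t) = W a b / (2 * β a) * walkWeight W β (b :: t) := by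
  simp only [walkWeight, wWeight, twoBetaMinus, List.zip_cons_cons, List.tail_cons,
    List.map_cons, List.prod_cons, List.dropLast_cons_cons]
  rw [mul_div_mul_comm]

variable {W β}

lemma walkWeight_nonneg (hW : ∀ a b, 0 ≤ W a b) (hβ : ∀ v, 0 ≤ β v) (l : List V) :
    0 ≤ walkWeight W β l :=
  div_nonneg
    (List.prod_nonneg fun _ h => by obtain ⟨p, -, rfl⟩ := List.mem_map.mp h; exact hW _ _)
    (List.prod_nonneg fun _ h => by obtain ⟨k, -, rfl⟩ := List.mem_map.mp h; linarith [hβ k])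

end WalkWeight

section Hmat

variable {V : Type*} [Fintype V] [DecidableEq V] {W : Matrix V V ℝ} {β : V → ℝ}

lemma Hmat_mulVec_apply (x : V → ℝ) (v : V) :
    (Hmat W β *ᵥ x) v = 2 * β v * x v - ∑ k, W v k * x k := by
  simp [Hmat, mulVec, dotProduct, sub_mul, Finset.sum_sub_distrib, diagonal_apply]

lemma Hmat_apply_nonpos (hW : ∀ a b, 0 ≤ W a b) (a b : V) (hab : a ≠ b) : Hmat W β a b ≤ 0 := by
  simp [Hmat, diagonal_apply_ne _ hab, hW a b]

lemma beta_pos_of_posDef (hW : ∀ a b, 0 ≤ W a b) (hpd : (Hmat W β).PosDef) (v : V) :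
    0 < β v := by
  have h := hpd.diag_pos (i := v)
  simp only [Hmat, Matrix.sub_apply, diagonal_apply_eq] at h
  linarith [hW v v]

end Hmat

section StoppedSum

variable {V : Type*} {W : Matrix V V ℝ} {β : V → ℝ} {i v : V}

variable (W β) in
noncomputable def stoppedSum (i v : V) : ℝ≥0∞ :=
  ∑' l : {l // IsStoppedWalkList (fun a b => 0 < W a b) v i l},
    ENNReal.ofReal (walkWeight W β l)

variable (W β) in
noncomputable def truncStoppedSum (i : V) (n : ℕ) (v : V) : ℝ≥0∞ :=
  ∑' l : {l // IsStoppedWalkList (fun a b => 0 < W a b) v i l},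
    if l.1.length ≤ n then ENNReal.ofReal (walkWeight W β l) else 0

lemma stoppedSum_self : stoppedSum W β i i = 1 := by
  simpa [stoppedSum] using IsStoppedWalkList.tsum_self fun l => ENNReal.ofReal (walkWeight W β l)

lemma truncStoppedSum_succ_self (n : ℕ) : truncStoppedSum W β i (n + 1) i = 1 := by
  simpa [truncStoppedSum] using IsStoppedWalkList.tsum_self fun l =>
    if l.length ≤ n + 1 then ENNReal.ofReal (walkWeight W β l) else 0

lemma truncStoppedSum_zero : truncStoppedSum W β i 0 v = 0 :=
  ENNReal.tsum_eq_zero.mpr fun l => if_neg (by simpa using l.2.1)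

variable [Fintype V]

lemma stoppedSum_eq_sum (hW : ∀ a b, 0 ≤ W a b) (hβ : ∀ v, 0 ≤ β v) (hvi : v ≠ i) :
    stoppedSum W β i v = ∑ k, ENNReal.ofReal (W v k / (2 * β v)) * stoppedSum W β i k := by
  refine IsStoppedWalkList.tsum_eq_sum_mul hvi (fun l => ENNReal.ofReal (walkWeight W β l))
    (fun l => ENNReal.ofReal (walkWeight W β l)) (fun k => ENNReal.ofReal (W v k / (2 * β v)))
    (fun k hk => by simp [le_antisymm (not_lt.mp hk) (hW v k)]) fun k t _ ht => ?_
  obtain ⟨s, rfl⟩ := ht.exists_eq_cons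
  rw [walkWeight_cons_cons, ENNReal.ofReal_mul (div_nonneg (hW v k) (by linarith [hβ v]))]

lemma truncStoppedSum_succ (hW : ∀ a b, 0 ≤ W a b) (hβ : ∀ v, 0 ≤ β v) (hvi : v ≠ i)
    (n : ℕ) :
    truncStoppedSum W β i (n + 1) v =
      ∑ k, ENNReal.ofReal (W v k / (2 * β v)) * truncStoppedSum W β i n k := by
  refine IsStoppedWalkList.tsum_eq_sum_mul hvi
    (fun l => if l.length ≤ n + 1 then ENNReal.ofReal (walkWeight W β l) else 0)
    (fun l => if l.length ≤ n then ENNReal.ofReal (walkWeight W β l) else 0)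
    (fun k => ENNReal.ofReal (W v k / (2 * β v)))
    (fun k hk => by simp [le_antisymm (not_lt.mp hk) (hW v k)]) fun k t _ ht => ?_
  obtain ⟨s, rfl⟩ := ht.exists_eq_cons
  rw [walkWeight_cons_cons, ENNReal.ofReal_mul (div_nonneg (hW v k) (by linarith [hβ v]))]
  simp only [List.length_cons, add_le_add_iff_right, mul_ite, mul_zero]

end StoppedSum

section Majorant

variable {V : Type*} [Fintype V] [DecidableEq V] {W : Matrix V V ℝ} {β : V → ℝ} {i : V}
  {u : V → ℝ}

lemma truncStoppedSum_le (hW : ∀ a b, 0 ≤ W a b) (hβ : ∀ v, 0 < β v) (hu : 0 ≤ u)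
    (hui : 1 ≤ u i) (hHu : ∀ v, v ≠ i → 0 ≤ (Hmat W β *ᵥ u) v) (n : ℕ) (v : V) :
    truncStoppedSum W β i n v ≤ ENNReal.ofReal (u v) := by
  induction n generalizing v with
  | zero => simp [truncStoppedSum_zero]
  | succ n ih =>
    rcases eq_or_ne v i with rfl | hvi
    · rw [truncStoppedSum_succ_self]
      exact ENNReal.one_le_ofReal.mpr hui
    have hβv : 0 < 2 * β v := by linarith [hβ v]
    have hmean : ∑ k, W v k / (2 * β v) * u k ≤ u v := by
      have h := hHu v hvi
      rw [Hmat_mulVec_apply] at h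
      simp_rw [div_mul_eq_mul_div]
      rw [← Finset.sum_div, div_le_iff₀ hβv]
      linarith
    calc truncStoppedSum W β i (n + 1) v
        = ∑ k, ENNReal.ofReal (W v k / (2 * β v)) * truncStoppedSum W β i n k :=
          truncStoppedSum_succ hW (fun v => (hβ v).le) hvi n
      _ ≤ ∑ k, ENNReal.ofReal (W v k / (2 * β v)) * ENNReal.ofReal (u k) := by
          gcongr with k
          exact ih k
      _ = ENNReal.ofReal (∑ k, W v k / (2 * β v) * u k) := by
          rw [ENNReal.ofReal_sum_of_nonneg fun k _ =>
            mul_nonneg (div_nonneg (hW v k) hβv.le) (hu k)]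
          simp_rw [ENNReal.ofReal_mul (div_nonneg (hW v _) hβv.le)]
      _ ≤ ENNReal.ofReal (u v) := ENNReal.ofReal_le_ofReal hmean

lemma stoppedSum_le (hW : ∀ a b, 0 ≤ W a b) (hβ : ∀ v, 0 < β v) (hu : 0 ≤ u)
    (hui : 1 ≤ u i) (hHu : ∀ v, v ≠ i → 0 ≤ (Hmat W β *ᵥ u) v) (v : V) :
    stoppedSum W β i v ≤ ENNReal.ofReal (u v) := by
  rw [stoppedSum, ENNReal.tsum_eq_iSup_sum]
  refine iSup_le fun s => ?_
  set N := s.sup fun l => l.1.length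
  calc ∑ l ∈ s, ENNReal.ofReal (walkWeight W β l)
      = ∑ l ∈ s, if l.1.length ≤ N then ENNReal.ofReal (walkWeight W β l) else 0 :=
        Finset.sum_congr rfl fun l hl =>
          (if_pos (Finset.le_sup (f := fun l => l.1.length) hl)).symm
    _ ≤ truncStoppedSum W β i N v := ENNReal.sum_le_tsum s
    _ ≤ ENNReal.ofReal (u v) := truncStoppedSum_le hW hβ hu hui hHu N v

lemma stoppedSum_ne_top (hW : ∀ a b, 0 ≤ W a b) (hβ : ∀ v, 0 < β v) (hu : 0 ≤ u)
    (hui : 1 ≤ u i) (hHu : ∀ v, v ≠ i → 0 ≤ (Hmat W β *ᵥ u) v) (v : V) :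
    stoppedSum W β i v ≠ ⊤ :=
  ne_top_of_le_ne_top ENNReal.ofReal_ne_top (stoppedSum_le hW hβ hu hui hHu v)

end Majorant

section RealSum

variable {V : Type*} {W : Matrix V V ℝ} {β : V → ℝ} {i v : V}

lemma tsum_walkWeight_eq_toReal (hW : ∀ a b, 0 ≤ W a b) (hβ : ∀ v, 0 ≤ β v) :
    ∑' l : {l // IsStoppedWalkList (fun a b => 0 < W a b) v i l}, walkWeight W β l =
      (stoppedSum W β i v).toReal := by
  rw [stoppedSum, ENNReal.tsum_toReal_eq fun _ => ENNReal.ofReal_ne_top]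
  exact tsum_congr fun l => (ENNReal.toReal_ofReal (walkWeight_nonneg hW hβ l)).symm

lemma summable_walkWeight (hW : ∀ a b, 0 ≤ W a b) (hβ : ∀ v, 0 ≤ β v)
    (h : stoppedSum W β i v ≠ ⊤) :
    Summable fun l : {l // IsStoppedWalkList (fun a b => 0 < W a b) v i l} =>
      walkWeight W β l :=
  (ENNReal.summable_toReal h).congr fun l => ENNReal.toReal_ofReal (walkWeight_nonneg hW hβ l)

lemma Hmat_mulVec_toReal_stoppedSum [Fintype V] [DecidableEq V] (hW : ∀ a b, 0 ≤ W a b)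
    (hβ : ∀ v, 0 < β v) (hfin : ∀ v, stoppedSum W β i v ≠ ⊤) (hvi : v ≠ i) :
    (Hmat W β *ᵥ fun v => (stoppedSum W β i v).toReal) v = 0 := by
  have hβv : 0 < 2 * β v := by linarith [hβ v]
  have h := congrArg ENNReal.toReal (stoppedSum_eq_sum hW (fun v => (hβ v).le) hvi)
  rw [ENNReal.toReal_sum fun k _ => ENNReal.mul_ne_top ENNReal.ofReal_ne_top (hfin k)] at h
  simp_rw [ENNReal.toReal_mul, ENNReal.toReal_ofReal (div_nonneg (hW v _) hβv.le)] at h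
  rw [Hmat_mulVec_apply, h, Finset.mul_sum, ← Finset.sum_sub_distrib]
  refine Finset.sum_eq_zero fun k _ => ?_
  rw [← mul_assoc, mul_div_cancel₀ _ hβv.ne', sub_self]

lemma toReal_stoppedSum_eq [Fintype V] [DecidableEq V] {u : V → ℝ} (hW : ∀ a b, 0 ≤ W a b)
    (hpd : (Hmat W β).PosDef) (hu : 0 ≤ u) (hui : u i = 1)
    (hHu : ∀ v, v ≠ i → (Hmat W β *ᵥ u) v = 0) (v : V) :
    (stoppedSum W β i v).toReal = u v := by
  have hβ := beta_pos_of_posDef hW hpd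
  have hfin := stoppedSum_ne_top hW hβ hu hui.ge fun v hv => (hHu v hv).ge
  suffices h : (fun v => (stoppedSum W β i v).toReal) - u = 0 from
    congrFun (sub_eq_zero.mp h) v
  refine hpd.eq_zero_of_forall_eq_zero_or_mulVec_eq_zero fun v => ?_
  rcases eq_or_ne v i with rfl | hvi
  · left
    simp [stoppedSum_self, hui]
  · right
    rw [mulVec_sub, Pi.sub_apply, Hmat_mulVec_toReal_stoppedSum hW hβ hfin hvi, hHu v hvi,
      sub_self]

end RealSum

theorem stmt9_general {V : Type*} [Fintype V] [DecidableEq V]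
    (W : Matrix V V ℝ) (hWpos : ∀ i j, 0 ≤ W i j)
    (β : V → ℝ) (hpd : (Hmat W β).PosDef) (i j : V) :
    Summable (fun l : {l : List V // IsStoppedWalkList (fun a b => 0 < W a b) j i l} =>
        wWeight W ↑l / twoBetaMinus β ↑l) ∧
    ∑' l : {l : List V // IsStoppedWalkList (fun a b => 0 < W a b) j i l},
        wWeight W ↑l / twoBetaMinus β ↑l
      = (Hmat W β)⁻¹ i j / (Hmat W β)⁻¹ i i := by
  have hβ : ∀ v, 0 < β v := beta_pos_of_posDef hWpos hpd
  set G := (Hmat W β)⁻¹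
  have hGii : 0 < G i i := hpd.inv.diag_pos
  set u : V → ℝ := (G i i)⁻¹ • (G *ᵥ Pi.single i 1)
  have hu_apply : ∀ v, u v = G v i / G i i := fun v => by simp [u, div_eq_inv_mul]
  have hHu : Hmat W β *ᵥ u = (G i i)⁻¹ • Pi.single i 1 := by
    rw [mulVec_smul, mulVec_mulVec,
      mul_nonsing_inv _ ((isUnit_iff_isUnit_det _).mp hpd.isUnit), one_mulVec]
  have hu : 0 ≤ u := fun v => (hu_apply v).symm ▸
    div_nonneg (hpd.inv_apply_nonneg (Hmat_apply_nonpos hWpos) v i) hGii.le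
  have hui : u i = 1 := by simp [hu_apply, hGii.ne']
  have hHu0 : ∀ v, v ≠ i → (Hmat W β *ᵥ u) v = 0 := fun v hv => by simp [hHu, hv]
  have hGji : G j i = G i j := by simpa using hpd.inv.isHermitian.apply i j
  refine ⟨summable_walkWeight hWpos (fun v => (hβ v).le)
    (stoppedSum_ne_top hWpos hβ hu hui.ge (fun v hv => (hHu0 v hv).ge) j), ?_⟩
  calc _ = (stoppedSum W β i j).toReal := tsum_walkWeight_eq_toReal hWpos fun v => (hβ v).le
    _ = G i j / G i i := by rw [toReal_stoppedSum_eq hWpos hpd hu hui hHu0, hu_apply, hGji]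

/-- If `H_β = 2 diag(β) − W` is positive definite and `G = (H_β)⁻¹`, then
for all `i,j` the family `(W_σ/(2β)^−_σ)` indexed by paths `σ` from `j` to `i` not hitting
`i` before their last vertex is summable, with sum `G(i,j)/G(i,i)`. -/
theorem stmt9 {V : Type*} [Fintype V] [DecidableEq V] [Nonempty V]
    (W : Matrix V V ℝ) (hWsymm : W.IsSymm) (hWpos : ∀ i j, 0 ≤ W i j)
    (hWdiag : ∀ i, W i i = 0) (β : V → ℝ) (hpd : (Hmat W β).PosDef) (i j : V) :
    Summable (fun l : {l : List V // IsStoppedWalkList (fun a b => 0 < W a b) j i l} =>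
        wWeight W ↑l / twoBetaMinus β ↑l) ∧
    ∑' l : {l : List V // IsStoppedWalkList (fun a b => 0 < W a b) j i l},
        wWeight W ↑l / twoBetaMinus β ↑l
      = (Hmat W β)⁻¹ i j / (Hmat W β)⁻¹ i i :=
  stmt9_general W hWpos β hpd i j
end
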